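/- arXiv:1906.04288 — 2 statements merged into one kernel-verified Lean document; each statement's English description precedes it below -/
import Mathlib

section
/- Let r ≥ 3, c = C(r,2)+1, and n ≥ c. If N ≤ (1 + 1/r²)^{n-1}, then there exists a c-coloring of the r-element subsets of an N-element set with no monochromatic Berge copy of K_n. Consequently, the Berge-Ramsey number R_r(Berge-K_n; c) exceeds (1 + 1/r²)^{n-1}. -/
/-- `χ` contains a monochromatic Berge copy of `K_n`: an `n`-element core `S` and an
injective assignment of same-colored `r`-sets `E u v ⊇ {u,v}` to pairs of `S`. -/
def HasMonoBerge (r n c N : ℕ) (χ : Finset (Fin N) → Fin c) : Prop :=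
  ∃ (S : Finset (Fin N)) (k : Fin c) (E : Fin N → Fin N → Finset (Fin N)),
    S.card = n ∧
    (∀ u ∈ S, ∀ v ∈ S, u ≠ v →
      (E u v).card = r ∧ u ∈ E u v ∧ v ∈ E u v ∧ χ (E u v) = k ∧ E u v = E v u) ∧
    (∀ u ∈ S, ∀ v ∈ S, ∀ u' ∈ S, ∀ v' ∈ S, u ≠ v → u' ≠ v' →
      E u v = E u' v' → ({u, v} : Finset (Fin N)) = {u', v'})

/-- The Berge-Ramsey number `R_r(Berge-K_n; c)`. -/
noncomputable def bergeRamsey (r n c : ℕ) : ℕ :=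
  sInf {N | ∀ χ : Finset (Fin N) → Fin c, HasMonoBerge r n c N χ}

/-!
Colour the pairs of `[N]` at random: when `N ≤ (1 + 1/r²)^(n-1)`, a union bound gives a pair
colouring `h` under which every `n`-set contains pairs of every colour. Colour each `r`-set `e`
by a colour that `h` does not use on the `C(r,2) < c` pairs inside `e`. In a monochromatic
Berge-`K_n` of colour `k` with core `S`, some pair `{u,v} ⊆ S` has `h {u,v} = k`, while
`{u,v} ⊆ E_uv` forces `χ E_uv ≠ k`.

Since `sInf ∅ = 0`, the bound on `bergeRamsey` also needs some `N` that forces a monochromatic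
Berge-`K_n`: fix `r - 2` vertices `D`, colour `{u,v}` by `χ ({u,v} ∪ D)` and apply Ramsey's
theorem.
-/

open Finset

lemma one_add_inv_sq_sq_mul_choose_two_le (r : ℕ) :
    (1 + 1 / (r : ℝ) ^ 2) ^ 2 * r.choose 2 ≤ r.choose 2 + 1 := by
  rcases Nat.eq_zero_or_pos r with rfl | hr
  · simp
  have hx : (1 : ℝ) ≤ r := by exact_mod_cast hr
  rw [Nat.cast_choose_two]
  field_simp
  nlinarith [pow_pos (by linarith : (0:ℝ) < r) 3, sq_nonneg ((r:ℝ) - 1)]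

lemma pow_pred_pow_eq_sq_pow_choose_two (β : ℝ) {n : ℕ} (hn : 1 ≤ n) :
    (β ^ (n - 1)) ^ n = (β ^ 2) ^ n.choose 2 := by
  obtain ⟨m, rfl⟩ : ∃ m, n = m + 1 := ⟨n - 1, by omega⟩
  have h := Nat.add_one_mul_choose_eq m 1
  rw [Nat.choose_one_right] at h
  rw [← pow_mul, ← pow_mul, Nat.add_sub_cancel, mul_comm 2, ← h, mul_comm]

lemma choose_mul_pow_lt_pow {r n N : ℕ} (hn : r.choose 2 + 1 ≤ n) (hn3 : 3 ≤ n)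
    (hN : (N : ℝ) ≤ (1 + 1 / (r : ℝ) ^ 2) ^ (n - 1)) :
    N.choose n * (r.choose 2 + 1) * r.choose 2 ^ n.choose 2 < (r.choose 2 + 1) ^ n.choose 2 := by
  set m : ℕ := r.choose 2
  set q : ℕ := n.choose 2
  set β : ℝ := 1 + 1 / (r : ℝ) ^ 2
  have hNn : (N : ℝ) ^ n ≤ (β ^ 2) ^ q := by
    rw [← pow_pred_pow_eq_sq_pow_choose_two β (by omega)]
    gcongr
  have hfact : ((m : ℝ) + 1) / n.factorial < 1 := by
    rw [div_lt_one (by positivity)]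
    exact_mod_cast (Nat.lt_of_le_of_lt hn (Nat.lt_factorial_self hn3))
  suffices (N.choose n : ℝ) * (m + 1) * m ^ q < (m + 1) ^ q by exact_mod_cast this
  calc (N.choose n : ℝ) * (m + 1) * m ^ q
      ≤ (N : ℝ) ^ n / n.factorial * (m + 1) * m ^ q := by
        gcongr; exact Nat.choose_le_pow_div n N
    _ ≤ (β ^ 2) ^ q / n.factorial * (m + 1) * m ^ q := by gcongr
    _ = (β ^ 2 * m) ^ q * ((m + 1) / n.factorial) := by rw [mul_pow]; ring
    _ ≤ (m + 1) ^ q * ((m + 1) / n.factorial) := by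
        gcongr; exact one_add_inv_sq_sq_mul_choose_two_le r
    _ < (m + 1) ^ q := mul_lt_of_lt_one_right (by positivity) hfact

section Counting

variable {α κ : Type*} [Fintype α] [DecidableEq α] [Fintype κ] [DecidableEq κ]

lemma card_filter_forall_ne_mul_pow (A : Finset α) (k : κ) :
    #{h : α → κ | ∀ a ∈ A, h a ≠ k} * Fintype.card κ ^ #A
      = (Fintype.card κ - 1) ^ #A * Fintype.card κ ^ Fintype.card α := by
  have hpi : ({h : α → κ | ∀ a ∈ A, h a ≠ k} : Finset _)
      = Fintype.piFinset fun a => if a ∈ A then univ.erase k else univ := by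
    ext h
    simp only [mem_filter, mem_univ, true_and, Fintype.mem_piFinset]
    refine forall_congr' fun a => ?_
    split_ifs with ha <;> simp [ha]
  rw [hpi, Fintype.card_piFinset, ← card_compl_add_card A, pow_add]
  simp only [apply_ite card, card_erase_of_mem (mem_univ k), card_univ, prod_ite, prod_const]
  simp only [subset_univ, filter_mem_eq_of_subset, filter_not, compl_eq_univ_sdiff]
  ring

lemma exists_coloring_forall_exists_pair_eq [Nonempty κ] {n : ℕ}
    (h : (Fintype.card α).choose n * Fintype.card κ * (Fintype.card κ - 1) ^ n.choose 2
      < Fintype.card κ ^ n.choose 2) :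
    ∃ χ : Finset α → κ,
      ∀ S : Finset α, #S = n → ∀ k, ∃ p ∈ S.powersetCard 2, χ p = k := by
  set c := Fintype.card κ
  set q := n.choose 2
  set M := Fintype.card (Finset α)
  let avoiding (S : Finset α) (k : κ) : Finset (Finset α → κ) :=
    {χ | ∀ p ∈ S.powersetCard 2, χ p ≠ k}
  let bad := (univ.powersetCard n).biUnion fun S => univ.biUnion (avoiding S)
  have hcard_avoiding : ∀ S ∈ univ.powersetCard n, ∀ k,
      #(avoiding S k) * c ^ q = (c - 1) ^ q * c ^ M := by
    intro S hS k
    have hq : #(S.powersetCard 2) = q := by rw [card_powersetCard, mem_powersetCard_univ.1 hS]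
    rw [← hq]
    exact card_filter_forall_ne_mul_pow _ k
  have hbad : #bad * c ^ q < c ^ q * c ^ M := calc
    #bad * c ^ q ≤ (∑ S ∈ univ.powersetCard n, ∑ k, #(avoiding S k)) * c ^ q := by
      gcongr
      exact card_biUnion_le.trans (sum_le_sum fun S _ => card_biUnion_le)
    _ = (Fintype.card α).choose n * c * (c - 1) ^ q * c ^ M := by
      simp only [sum_mul, sum_congr rfl fun S hS => sum_congr rfl fun k _ => hcard_avoiding S hS k]
      simp only [sum_const, card_powersetCard, card_univ, smul_eq_mul]
      ring
    _ < c ^ q * c ^ M := by gcongr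
  obtain ⟨χ, -, hχ⟩ := exists_mem_notMem_of_card_lt_card (s := bad) (t := univ) <| by
    rw [card_univ, Fintype.card_fun]
    exact Nat.lt_of_mul_lt_mul_right (hbad.trans_eq (mul_comm _ _))
  refine ⟨χ, fun S hS k => ?_⟩
  by_contra! hmiss
  exact hχ (mem_biUnion.2 ⟨S, mem_powersetCard_univ.2 hS,
    mem_biUnion.2 ⟨k, mem_univ k, by simpa [avoiding] using hmiss⟩⟩)

end Counting

variable {α κ : Type*}

lemma exists_coloring_ne_on_pairs [Fintype κ] (h : Finset α → κ) {r : ℕ}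
    (hr : r.choose 2 < Fintype.card κ) :
    ∃ χ : Finset α → κ,
      ∀ e : Finset α, #e = r → ∀ p ∈ e.powersetCard 2, χ e ≠ h p := by
  classical
  have : ∀ e : Finset α, ∃ k, #e = r → k ∉ (e.powersetCard 2).image h := by
    intro e
    by_cases he : #e = r
    · obtain ⟨k, -, hk⟩ := exists_mem_notMem_of_card_lt_card (t := univ) <| calc
        #((e.powersetCard 2).image h) ≤ #(e.powersetCard 2) := card_image_le
        _ < #(univ : Finset κ) := by rwa [card_powersetCard, he, card_univ]
      exact ⟨k, fun _ => hk⟩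
    · exact ⟨(Fintype.card_pos_iff.1 (by omega)).some, fun h => absurd h he⟩
  choose χ hχ using this
  exact ⟨χ, fun e he p hp hχp => hχ e he (mem_image.2 ⟨p, hp, hχp.symm⟩)⟩

lemma not_hasMonoBerge {r n c N : ℕ} {h χ : Finset (Fin N) → Fin c}
    (hh : ∀ S : Finset (Fin N), #S = n → ∀ k, ∃ p ∈ S.powersetCard 2, h p = k)
    (hχ : ∀ e : Finset (Fin N), #e = r → ∀ p ∈ e.powersetCard 2, χ e ≠ h p) :
    ¬ HasMonoBerge r n c N χ := by
  rintro ⟨S, k, E, hS, hE, -⟩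
  obtain ⟨p, hp, rfl⟩ := hh S hS k
  obtain ⟨hpS, hp2⟩ := mem_powersetCard.1 hp
  obtain ⟨u, v, huv, rfl⟩ := card_eq_two.1 hp2
  obtain ⟨hcard, hu, hv, hχE, -⟩ := hE u (hpS (by simp)) v (hpS (by simp)) huv
  exact hχ _ hcard {u, v}
    (mem_powersetCard.2 ⟨insert_subset hu (singleton_subset_iff.2 hv), hp2⟩) hχE

lemma exists_not_hasMonoBerge {r c n N : ℕ} (hc : c = r.choose 2 + 1) (hn : c ≤ n)
    (hn3 : 3 ≤ n) (hN : (N : ℝ) ≤ (1 + 1 / (r : ℝ) ^ 2) ^ (n - 1)) :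
    ∃ χ : Finset (Fin N) → Fin c, ¬ HasMonoBerge r n c N χ := by
  subst hc
  obtain ⟨h, hh⟩ := exists_coloring_forall_exists_pair_eq (α := Fin N)
    (κ := Fin (r.choose 2 + 1)) (by simpa using choose_mul_pow_lt_pow hn hn3 hN)
  obtain ⟨χ, hχ⟩ := exists_coloring_ne_on_pairs h (r := r) (by simp)
  exact ⟨χ, not_hasMonoBerge hh hχ⟩

section Ramsey

variable [LinearOrder α] [Fintype κ] [Nonempty κ]

/- Greedy: keep the minimum `x` of `A` and recurse into the largest colour class of the edges
from `x` to the rest of `A`. -/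
lemma exists_subset_color_determined_by_min (f : α → α → κ) (m : ℕ) (A : Finset α)
    (hA : (Fintype.card κ + 1) ^ m ≤ #A) :
    ∃ T ⊆ A, #T = m ∧ ∃ g : α → κ, ∀ u ∈ T, ∀ v ∈ T, u < v → f u v = g u := by
  classical
  induction m generalizing A with
  | zero => exact ⟨∅, empty_subset A, card_empty, fun _ => Classical.arbitrary κ, by simp⟩
  | succ m ih =>
    set c := Fintype.card κ with hc_def
    have hc : 0 < c := Fintype.card_pos
    have hP : 0 < (c + 1) ^ m := by positivity
    have hA0 : A.Nonempty := card_pos.1 (lt_of_lt_of_le (by positivity) hA)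
    set x := A.min' hA0
    obtain ⟨k, -, hk⟩ := exists_lt_card_fiber_of_mul_lt_card_of_maps_to
      (s := A.erase x) (t := univ) (f := f x) (n := (c + 1) ^ m - 1) (fun _ _ => mem_univ _) <| by
        rw [card_erase_of_mem (min'_mem A hA0), card_univ, ← hc_def, Nat.mul_sub_one]
        rw [pow_succ, mul_add_one, mul_comm] at hA
        have : c ≤ c * (c + 1) ^ m := Nat.le_mul_of_pos_right c hP
        omega
    obtain ⟨T, hTB, hT, g, hg⟩ :=
      ih _ (by omega : (c + 1) ^ m ≤ #{y ∈ A.erase x | f x y = k})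
    have hTA : ∀ u ∈ T, u ∈ A ∧ u ≠ x ∧ f x u = k := fun u hu => by
      obtain ⟨hu, hux⟩ := mem_filter.1 (hTB hu)
      exact ⟨mem_of_mem_erase hu, ne_of_mem_erase hu, hux⟩
    refine ⟨insert x T, insert_subset (min'_mem A hA0) fun u hu => (hTA u hu).1, ?_,
      Function.update g x k, ?_⟩
    · rw [card_insert_of_notMem fun hx => (hTA x hx).2.1 rfl, hT]
    rintro u hu v hv huv
    rcases mem_insert.1 hu with rfl | hu
    · rcases mem_insert.1 hv with rfl | hv
      · exact absurd huv (lt_irrefl _)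
      · rw [Function.update_self, (hTA v hv).2.2]
    · rcases mem_insert.1 hv with rfl | hv
      · exact absurd (A.min'_le u (hTA u hu).1) (not_le.2 huv)
      · rw [Function.update_of_ne (hTA u hu).2.1]
        exact hg u hu v hv huv

lemma exists_monochromatic_subset (f : α → α → κ) (n : ℕ) (A : Finset α)
    (hA : (Fintype.card κ + 1) ^ (Fintype.card κ * n + 1) ≤ #A) :
    ∃ S ⊆ A, #S = n ∧ ∃ k, ∀ u ∈ S, ∀ v ∈ S, u < v → f u v = k := by
  classical
  obtain ⟨T, hTA, hT, g, hg⟩ := exists_subset_color_determined_by_min f _ A hA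
  obtain ⟨k, -, hk⟩ := exists_lt_card_fiber_of_mul_lt_card_of_maps_to
    (s := T) (t := univ) (f := g) (n := n) (fun _ _ => mem_univ _) (by rw [card_univ, hT]; omega)
  obtain ⟨S, hSk, hS⟩ := exists_subset_card_eq hk.le
  have hST : ∀ u ∈ S, u ∈ T ∧ g u = k := fun u hu => mem_filter.1 (hSk hu)
  refine ⟨S, fun u hu => hTA (hST u hu).1, hS, k, fun u hu v hv huv => ?_⟩
  rw [hg u (hST u hu).1 v (hST v hv).1 huv, (hST u hu).2]

end Ramsey

lemma exists_forall_hasMonoBerge {r : ℕ} (hr : 2 ≤ r) (n c : ℕ) :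
    ∃ N, ∀ χ : Finset (Fin N) → Fin c, HasMonoBerge r n c N χ := by
  set M := (c + 1) ^ (c * n + 1)
  refine ⟨M + (r - 2), fun χ => ?_⟩
  have : Nonempty (Fin c) := ⟨χ ∅⟩
  obtain ⟨D, -, hD⟩ :=
    exists_subset_card_eq (show r - 2 ≤ #(univ : Finset (Fin (M + (r - 2)))) by simp)
  set E : Fin _ → Fin _ → Finset (Fin _) := fun u v => insert u (insert v D)
  have hE_comm : ∀ u v, E u v = E v u := fun u v => insert_comm u v D
  obtain ⟨S, hS_compl, hS, k, hk⟩ := exists_monochromatic_subset (fun u v => χ (E u v)) n Dᶜ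
    (by simp [M, card_compl, hD])
  have hSD : ∀ u ∈ S, u ∉ D := fun u hu => mem_compl.1 (hS_compl hu)
  have hE_sdiff : ∀ u ∈ S, ∀ v ∈ S, E u v \ D = {u, v} := fun u hu v hv => by
    rw [insert_sdiff_of_notMem _ (hSD u hu), insert_sdiff_of_notMem _ (hSD v hv), sdiff_self,
      bot_eq_empty, LawfulSingleton.insert_empty_eq]
  refine ⟨S, k, E, hS, fun u hu v hv huv => ⟨?_, mem_insert_self _ _,
    mem_insert_of_mem (mem_insert_self _ _), ?_, hE_comm u v⟩,
    fun u hu v hv u' hu' v' hv' _ _ hEE => ?_⟩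
  · rw [card_insert_of_notMem (by simp [huv, hSD u hu]), card_insert_of_notMem (hSD v hv), hD]
    omega
  · rcases huv.lt_or_gt with h | h
    · exact hk u hu v hv h
    · rw [hE_comm]
      exact hk v hv u hu h
  · rw [← hE_sdiff u hu v hv, ← hE_sdiff u' hu' v' hv', hEE]

/-- For `r ≥ 3`, `c = C(r,2)+1`, `n ≥ c` and `N ≤ (1+1/r²)^(n-1)`, there is a
`c`-coloring of the `r`-subsets of `[N]` with no monochromatic Berge-`K_n`;
consequently `R_r(Berge-K_n; c) > (1+1/r²)^(n-1)`. -/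
theorem stmt6 (r c n : ℕ) (hr : 3 ≤ r) (hc : c = r.choose 2 + 1) (hn : c ≤ n) :
    (∀ N : ℕ, (N : ℝ) ≤ (1 + 1 / (r : ℝ) ^ 2) ^ (n - 1) →
      ∃ χ : Finset (Fin N) → Fin c, ¬ HasMonoBerge r n c N χ) ∧
    (1 + 1 / (r : ℝ) ^ 2) ^ (n - 1) < (bergeRamsey r n c : ℝ) := by
  have hn3 : 3 ≤ n := by
    have h3 : (3 : ℕ).choose 2 = 3 := rfl
    have := Nat.choose_le_choose 2 hr
    omega
  have lower (N : ℕ) (hN : (N : ℝ) ≤ (1 + 1 / (r : ℝ) ^ 2) ^ (n - 1)) :=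
    exists_not_hasMonoBerge hc hn hn3 hN
  refine ⟨lower, ?_⟩
  obtain ⟨N₀, hN₀⟩ := exists_forall_hasMonoBerge (by omega : 2 ≤ r) n c
  by_contra! hle
  obtain ⟨χ, hχ⟩ := lower _ hle
  exact hχ (Nat.sInf_mem (s := {N | ∀ χ : Finset (Fin N) → Fin c, HasMonoBerge r n c N χ})
    ⟨N₀, hN₀⟩ χ)
end

section
/- For c ≥ 2 and any integers N, n with n ≥ c ≥ 2 and N < (c/(c-1))^{(n-1)/2}, we have c · C(N,n) · ((c-1)/c)^{C(n,2)} < 1. -/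
/-- For `n ≥ c ≥ 2` and `N < (c/(c-1))^((n-1)/2)`, we have
`c · C(N,n) · ((c-1)/c)^C(n,2) < 1`. -/
theorem stmt7 (c N n : ℕ) (hc : 2 ≤ c) (hn : c ≤ n)
    (hN : (N : ℝ) < ((c : ℝ) / ((c : ℝ) - 1)) ^ (((n : ℝ) - 1) / 2)) :
    (c : ℝ) * (N.choose n : ℝ) * (((c : ℝ) - 1) / c) ^ n.choose 2 < 1 := by
  have hc2 : (2:ℝ) ≤ (c:ℝ) := by exact_mod_cast hc
  have hn2 : 2 ≤ n := le_trans hc hn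
  have hn2' : (2:ℝ) ≤ (n:ℝ) := by exact_mod_cast hn2
  have hcpos : (0:ℝ) < c := by linarith
  set s : ℝ := ((c:ℝ) - 1) / c with hs_def
  have hs0 : 0 < s := div_pos (by linarith) hcpos
  have hx : (c:ℝ) / ((c:ℝ) - 1) = s⁻¹ := by
    rw [hs_def, inv_div]
  have hrpos : 0 < s ^ ((((n:ℝ) - 1) / 2) : ℝ) := Real.rpow_pos_of_pos hs0 _
  have hNs : (N:ℝ) * s ^ ((((n:ℝ) - 1) / 2) : ℝ) < 1 := by
    rw [hx, Real.inv_rpow hs0.le] at hN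
    rw [← one_div] at hN
    have := (lt_div_iff₀ hrpos).mp hN
    linarith
  have hnat : c * N.choose n ≤ N ^ n := by
    calc c * N.choose n ≤ n.factorial * N.choose n :=
          Nat.mul_le_mul_right _ (le_trans hn (Nat.self_le_factorial n))
      _ = n.factorial * N.choose n := rfl
      _ = N.descFactorial n := (Nat.descFactorial_eq_factorial_mul_choose N n).symm
      _ ≤ N ^ n := Nat.descFactorial_le_pow N n
  have hc2nat : 2 * n.choose 2 = n * (n - 1) := by
    rw [Nat.choose_two_right, Nat.mul_div_cancel' ]
    exact even_iff_two_dvd.mp (Nat.even_mul_pred_self n)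
  have hcast : ((n.choose 2 : ℕ) : ℝ) = ((n:ℝ) - 1) / 2 * n := by
    have h1 : ((n - 1 : ℕ) : ℝ) = (n:ℝ) - 1 := by
      rw [Nat.cast_sub (by omega)]; norm_num
    have h2 : (2:ℝ) * (n.choose 2 : ℝ) = (n:ℝ) * ((n:ℝ) - 1) := by
      rw [← h1]
      exact_mod_cast congrArg (Nat.cast (R := ℝ)) hc2nat
    linarith
  have hkey : s ^ (n.choose 2) = (s ^ ((((n:ℝ) - 1) / 2) : ℝ)) ^ n := by
    rw [← Real.rpow_natCast s (n.choose 2), ← Real.rpow_natCast (s ^ ((((n:ℝ) - 1) / 2) : ℝ)) n,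
      ← Real.rpow_mul hs0.le]
    rw [hcast]
  calc (c : ℝ) * (N.choose n : ℝ) * s ^ n.choose 2
      ≤ (N:ℝ) ^ n * s ^ n.choose 2 := by
        apply mul_le_mul_of_nonneg_right _ (pow_nonneg hs0.le _)
        exact_mod_cast hnat
    _ = ((N:ℝ) * s ^ ((((n:ℝ) - 1) / 2) : ℝ)) ^ n := by rw [hkey, mul_pow]
    _ < 1 := pow_lt_one₀ (by positivity) hNs (by omega)
end
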